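/- arXiv:2109.10804 — 5 statements merged into one kernel-verified Lean document; each statement's English description precedes it below -/
import Mathlib

section
/- Let e: ℝ → ℂ be a nonconstant C² map satisfying e''(x) = ∇W(e(x)) and the equipartition relation ½|e'(x)|² = W(e(x)) for all x ∈ ℝ. Then f(e(x)) ≠ 0 ためall x ∈ ℝ, and consequently e'(x) ≠ 0 for all x ∈ ℝ. -/
/-!
Along a solution, `|e''| = |∇W(e)| = 2 |f(e)| |f'(e)|`, and equipartition gives `|f(e)| ≤ |e'|`.
Hence `g = e'` obeys the linear differential inequality `|g'| ≤ 2 |f'(e)| |g|`, whose coefficient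
is continuous. By equipartition again, a zero of `f ∘ e` is a zero of `e'`, and Grönwall's
inequality, run forwards and backwards in time from that point, forces `e' ≡ 0`: `e` is constant.
-/

open MeasureTheory Complex Filter

noncomputable def W (f : ℂ → ℂ) (z : ℂ) : ℝ := ‖f z‖ ^ 2

open Set in
theorem eq_zero_of_norm_deriv_le_mul_norm_self_of_le {E : Type*} [NormedAddCommGroup E]
    [NormedSpace ℝ E] {g : ℝ → E} {K : ℝ → ℝ} (hK : Continuous K) (hg : Differentiable ℝ g)
    (bound : ∀ x, ‖deriv g x‖ ≤ K x * ‖g x‖) {x₀ : ℝ} (h₀ : g x₀ = 0) {x : ℝ} (hx : x₀ ≤ x) :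
    g x = 0 := by
  obtain ⟨C, hC⟩ := isCompact_Icc.exists_bound_of_continuousOn (hK.continuousOn (s := Icc x₀ x))
  refine eq_zero_of_abs_deriv_le_mul_abs_self_of_eq_zero_right (K := C) hg.continuous.continuousOn
    (fun y _ => (hg y).hasDerivAt.hasDerivWithinAt) h₀ (fun y hy => ?_) x ⟨hx, le_rfl⟩
  calc ‖deriv g y‖ ≤ K y * ‖g y‖ := bound y
    _ ≤ C * ‖g y‖ := by
      gcongr
      exact (le_abs_self _).trans (hC y (Ico_subset_Icc_self hy))

theorem eq_zero_of_norm_deriv_le_mul_norm_self {E : Type*} [NormedAddCommGroup E]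
    [NormedSpace ℝ E] {g : ℝ → E} {K : ℝ → ℝ} (hK : Continuous K) (hg : Differentiable ℝ g)
    (bound : ∀ x, ‖deriv g x‖ ≤ K x * ‖g x‖) {x₀ : ℝ} (h₀ : g x₀ = 0) (x : ℝ) : g x = 0 := by
  rcases le_total x₀ x with hx | hx
  · exact eq_zero_of_norm_deriv_le_mul_norm_self_of_le hK hg bound h₀ hx
  · have hg' : Differentiable ℝ fun t => g (-t) := hg.comp differentiable_neg
    have bound' : ∀ t, ‖deriv (fun t => g (-t)) t‖ ≤ K (-t) * ‖g (-t)‖ := fun t => by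
      simpa [deriv_comp_neg] using bound (-t)
    simpa using eq_zero_of_norm_deriv_le_mul_norm_self_of_le (hK.comp continuous_neg) hg' bound'
      (x₀ := -x₀) (by simpa using h₀) (neg_le_neg hx)

theorem hasGradientAt_W {f : ℂ → ℂ} {z : ℂ} (hf : DifferentiableAt ℂ f z) :
    HasGradientAt (W f) (2 * f z * (starRingEnd ℂ) (deriv f z)) z := by
  rw [hasGradientAt_iff_hasFDerivAt]
  refine (hf.hasDerivAt.hasFDerivAt.restrictScalars ℝ).norm_sq.congr_fderiv ?_
  ext h
  simp only [smul_apply, ContinuousLinearMap.comp_apply,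
    ContinuousLinearMap.coe_restrictScalars', ContinuousLinearMap.toSpanSingleton_apply,
    coe_innerSL_apply, InnerProductSpace.toDual_apply_apply, Complex.inner, smul_eq_mul, map_mul,
    mul_re, mul_im, conj_re, conj_im, re_ofNat, im_ofNat]
  ring

section Equipartition

variable {f : ℂ → ℂ} {e : ℝ → ℂ}

theorem norm_le_norm_deriv_of_equipartition {x : ℝ} (heq : 2⁻¹ * ‖deriv e x‖ ^ 2 = W f (e x)) :
    ‖f (e x)‖ ≤ ‖deriv e x‖ := by
  rw [W] at heq
  nlinarith [heq, norm_nonneg (f (e x)), norm_nonneg (deriv e x)]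

theorem deriv_eq_zero_iff_of_equipartition {x : ℝ} (heq : 2⁻¹ * ‖deriv e x‖ ^ 2 = W f (e x)) :
    deriv e x = 0 ↔ f (e x) = 0 := by
  rw [W] at heq
  constructor <;> intro h <;> simpa [h] using heq.symm

theorem norm_deriv_deriv_le_of_equipartition (hf : Differentiable ℂ f)
    (hODE : ∀ x, deriv (deriv e) x = gradient (W f) (e x))
    (heq : ∀ x, 2⁻¹ * ‖deriv e x‖ ^ 2 = W f (e x)) (x : ℝ) :
    ‖deriv (deriv e) x‖ ≤ 2 * ‖deriv f (e x)‖ * ‖deriv e x‖ :=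
  calc ‖deriv (deriv e) x‖ = 2 * ‖deriv f (e x)‖ * ‖f (e x)‖ := by
        rw [hODE, (hasGradientAt_W (hf _)).gradient]
        simp only [norm_mul, Complex.norm_conj, Complex.norm_ofNat]
        ring
    _ ≤ 2 * ‖deriv f (e x)‖ * ‖deriv e x‖ := by
        gcongr
        exact norm_le_norm_deriv_of_equipartition (heq x)

end Equipartition

/-- If `e` is a nonconstant `C²` solution of `e'' = ∇W(e)` satisfying the
equipartition relation `½|e'|² = W(e)`, then `f(e(x)) ≠ 0` for all `x`, and
consequently `e'(x) ≠ 0` for all `x`. -/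
theorem statement5 (f : ℂ → ℂ) (hf : Differentiable ℂ f)
    (e : ℝ → ℂ) (he : ContDiff ℝ 2 e)
    (hnonconst : ∃ x y : ℝ, e x ≠ e y)
    (hODE : ∀ x : ℝ, deriv (deriv e) x = gradient (W f) (e x))
    (heq : ∀ x : ℝ, 2⁻¹ * ‖deriv e x‖ ^ 2 = W f (e x)) :
    ∀ x : ℝ, f (e x) ≠ 0 ∧ deriv e x ≠ 0 := by
  suffices hne : ∀ x, deriv e x ≠ 0 from
    fun x => ⟨(deriv_eq_zero_iff_of_equipartition (heq x)).not.mp (hne x), hne x⟩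
  intro x₀ h₀
  have hK : Continuous fun x => 2 * ‖deriv f (e x)‖ :=
    continuous_const.mul ((hf.contDiff.continuous_deriv le_rfl).comp he.continuous).norm
  have hde : Differentiable ℝ (deriv e) := (he.deriv' (n := 1)).differentiable one_ne_zero
  have hde_zero : ∀ x, deriv e x = 0 :=
    eq_zero_of_norm_deriv_le_mul_norm_self hK hde
      (norm_deriv_deriv_le_of_equipartition hf hODE heq) h₀
  obtain ⟨x, y, hxy⟩ := hnonconst
  exact hxy (is_const_of_deriv_eq_zero (he.differentiable two_ne_zero) hde_zero x y)
end

section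
/- Let e: ℝ → ℂ be a C² map satisfying e''(x) = 2 f(e(x))·conj(f'(e(x))), the equipartition relation ½|e'(x)|² = |f(e(x))|², and f(e(x)) ≠ 0 for all x ∈ ℝ. Then there exists a constant m ∈ ℂ with |m| = 1 such that e'(x) = √2 · m · conj(f(e(x))) for all x ∈ ℝ. -/
open MeasureTheory Complex Filter

open ComplexConjugate

theorem div_eq_div_of_deriv_mul_eq {𝕜 𝕜' : Type*} [RCLike 𝕜]
    [NontriviallyNormedField 𝕜'] [NormedAlgebra 𝕜 𝕜'] {a b a' b' : 𝕜 → 𝕜'} (ha : ∀ x, HasDerivAt a (a' x) x)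
    (hb : ∀ x, HasDerivAt b (b' x) x) (hb0 : ∀ x, b x ≠ 0)
    (hwronskian : ∀ x, a' x * b x = a x * b' x) (x y : 𝕜) :
    a x / b x = a y / b y := by
  have hderiv : ∀ x, HasDerivAt (a / b) 0 x := fun x => by
    simpa [hwronskian x] using (ha x).div (hb x) (hb0 x)
  exact is_const_of_deriv_eq_zero (fun x => (hderiv x).differentiableAt)
    (fun x => (hderiv x).deriv) x y

theorem norm_eq_sqrt_two_mul_of_half_sq_eq {E F : Type*} [SeminormedAddGroup E]
    [SeminormedAddGroup F] {u : E} {v : F} (h : 2⁻¹ * ‖u‖ ^ 2 = ‖v‖ ^ 2) :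
    ‖u‖ = √2 * ‖v‖ := by
  rw [← Real.sqrt_sq (norm_nonneg u), ← Real.sqrt_sq (norm_nonneg v),
    ← Real.sqrt_mul zero_le_two]
  congr 1
  linarith

theorem mul_conj_eq_two_mul_of_half_sq_eq {u v : ℂ} (h : 2⁻¹ * ‖u‖ ^ 2 = ‖v‖ ^ 2) :
    u * conj u = 2 * (v * conj v) := by
  rw [mul_conj, mul_conj, normSq_eq_norm_sq, normSq_eq_norm_sq]
  exact_mod_cast (by linarith : ‖u‖ ^ 2 = 2 * ‖v‖ ^ 2)

/-- If a `C²` map `e` satisfies `e'' = 2 f(e) conj(f'(e))`, the equipartition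
relation `½|e'|² = |f(e)|²`, and `f(e(x)) ≠ 0` for all `x`, then there is a
constant `m ∈ ℂ` with `|m| = 1` such that `e' = √2 m conj(f(e))`. -/
theorem statement6 (f : ℂ → ℂ) (hf : Differentiable ℂ f)
    (e : ℝ → ℂ) (he : ContDiff ℝ 2 e)
    (hODE : ∀ x : ℝ, deriv (deriv e) x = 2 * f (e x) * (starRingEnd ℂ) (deriv f (e x)))
    (heq : ∀ x : ℝ, 2⁻¹ * ‖deriv e x‖ ^ 2 = ‖f (e x)‖ ^ 2)
    (hnz : ∀ x : ℝ, f (e x) ≠ 0) :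
    ∃ m : ℂ, ‖m‖ = 1 ∧
      ∀ x : ℝ, deriv e x = (Real.sqrt 2 : ℂ) * m * (starRingEnd ℂ) (f (e x)) := by
  have he' : ∀ x, HasDerivAt e (deriv e x) x := fun x =>
    (he.differentiable two_ne_zero x).hasDerivAt
  have he'' : ∀ x, HasDerivAt (deriv e) (deriv (deriv e) x) x := fun x =>
    (he.differentiable_deriv_two x).hasDerivAt
  have hconj_fe : ∀ x, HasDerivAt (fun x => conj (f (e x)))
      (conj (deriv f (e x) * deriv e x)) x := fun x =>
    ((hf (e x)).hasDerivAt.comp x (he' x)).star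
  have hconj_ne : ∀ x, conj (f (e x)) ≠ 0 := fun x => (map_ne_zero _).mpr (hnz x)
  have hconst : ∀ x, deriv e x / conj (f (e x)) = deriv e 0 / conj (f (e 0)) := fun x =>
    div_eq_div_of_deriv_mul_eq he'' hconj_fe hconj_ne (fun x => by
      rw [hODE x, map_mul]
      linear_combination -conj (deriv f (e x)) * mul_conj_eq_two_mul_of_half_sq_eq (heq x)) x 0
  have hs2 : (√2 : ℂ) ≠ 0 := ofReal_ne_zero.mpr (by positivity)
  refine ⟨deriv e 0 / conj (f (e 0)) / √2, ?_, fun x => ?_⟩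
  · have hf0 : ‖f (e 0)‖ ≠ 0 := norm_ne_zero_iff.mpr (hnz 0)
    rw [norm_div, norm_div, RCLike.norm_conj, norm_real, Real.norm_of_nonneg (by positivity),
      norm_eq_sqrt_two_mul_of_half_sq_eq (heq 0)]
    field_simp
  · rw [← hconst x]
    field_simp [hconj_ne x, hs2]
end

section
/- Let m ∈ ℂ with |m| = 1 and let e: ℝ → ℂ be a C¹ map satisfying e'(x) = √2 · m · conj(f(e(x))) for all x ∈ ℝ. Then for every compactly supported C¹ function h: ℝ → ℂ, one has the integration-by-parts identity −√2 · Re( conj(m) · ∫_ℝ f'(e(x)) · (h(x)²)' dx ) = 2 · Re( ∫_ℝ f''(e(x)) · conj(f(e(x))) · h(x)² dx ). -/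
open MeasureTheory Complex Filter

theorem integral_mul_deriv_eq_neg_integral_deriv_mul_of_hasCompactSupport
    {A : Type*} [NormedRing A] [NormedAlgebra ℝ A] {u u' v : ℝ → A}
    (hu : ∀ x, HasDerivAt u (u' x) x) (hu' : Continuous u')
    (hv : ContDiff ℝ 1 v) (hv_supp : HasCompactSupport v) :
    ∫ x, u x * deriv v x = -∫ x, u' x * v x := by
  have hu_cont : Continuous u := continuous_iff_continuousAt.2 fun x => (hu x).continuousAt
  have hv' : Continuous (deriv v) := hv.continuous_deriv le_rfl
  exact integral_mul_deriv_eq_deriv_mul_of_integrable (fun x _ => hu x)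
    (fun x _ => (hv.differentiable one_ne_zero x).hasDerivAt)
    ((hu_cont.mul hv').integrable_of_hasCompactSupport hv_supp.deriv.mul_left)
    ((hu'.mul hv.continuous).integrable_of_hasCompactSupport hv_supp.mul_left)
    ((hu_cont.mul hv.continuous).integrable_of_hasCompactSupport hv_supp.mul_left)

theorem neg_sqrt_two_mul_re_conj_mul_neg_sqrt_two_mul {m : ℂ} (hm : ‖m‖ = 1) (z : ℂ) :
    -Real.sqrt 2 * ((starRingEnd ℂ) m * -((Real.sqrt 2 : ℂ) * m * z)).re = 2 * z.re := by
  have hmm : (starRingEnd ℂ) m * m = 1 := by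
    rw [conj_mul', hm]; norm_num
  have hsq : Real.sqrt 2 * Real.sqrt 2 = 2 := Real.mul_self_sqrt zero_le_two
  rw [show (starRingEnd ℂ) m * -((Real.sqrt 2 : ℂ) * m * z)
      = -((starRingEnd ℂ) m * m) * (Real.sqrt 2 * z) by ring,
    hmm, neg_one_mul, neg_re, re_ofReal_mul, neg_mul_neg, ← mul_assoc, hsq]

/-- Integration by parts: if `|m| = 1` and `e' = √2 m conj(f(e))`, then for every
compactly supported `C¹` function `h : ℝ → ℂ`,
`-√2 Re(conj m ∫ f'(e) (h²)') = 2 Re(∫ f''(e) conj(f(e)) h²)`. -/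
theorem statement7 (f : ℂ → ℂ) (hf : Differentiable ℂ f)
    (m : ℂ) (hm : ‖m‖ = 1) (e : ℝ → ℂ)
    (he : ∀ x : ℝ, HasDerivAt e ((Real.sqrt 2 : ℂ) * m * (starRingEnd ℂ) (f (e x))) x)
    (h : ℝ → ℂ) (hh : ContDiff ℝ 1 h) (hsupp : HasCompactSupport h) :
    -Real.sqrt 2 * ((starRingEnd ℂ) m
        * ∫ x : ℝ, deriv f (e x) * deriv (fun y => h y ^ 2) x).re
      = 2 * (∫ x : ℝ, deriv (deriv f) (e x) * (starRingEnd ℂ) (f (e x)) * h x ^ 2).re := by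
  have he_cont : Continuous e := continuous_iff_continuousAt.2 fun x => (he x).continuousAt
  have hf_cont : Continuous f := hf.continuous
  have hf''_cont : Continuous (deriv (deriv f)) := hf.deriv.deriv.continuous
  have hderiv : ∀ x, HasDerivAt (fun x => deriv f (e x))
      (deriv (deriv f) (e x) * ((Real.sqrt 2 : ℂ) * m * (starRingEnd ℂ) (f (e x)))) x :=
    fun x => (hf.deriv (e x)).hasDerivAt.comp x (he x)
  have hsupp_sq : HasCompactSupport fun y => h y ^ 2 := by
    simp_rw [sq]; exact hsupp.mul_left
  have hparts : ∫ x : ℝ, deriv f (e x) * deriv (fun y => h y ^ 2) x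
      = -((Real.sqrt 2 : ℂ) * m
        * ∫ x : ℝ, deriv (deriv f) (e x) * (starRingEnd ℂ) (f (e x)) * h x ^ 2) := by
    rw [integral_mul_deriv_eq_neg_integral_deriv_mul_of_hasCompactSupport hderiv
      (by fun_prop) (hh.pow 2) hsupp_sq, ← integral_const_mul]
    congr 2 with x
    ring
  rw [hparts, neg_sqrt_two_mul_re_conj_mul_neg_sqrt_two_mul hm]
end

section
/- Let m ∈ ℂ with |m| = 1 and let e: ℝ → ℂ be a C¹ map satisfying e'(x) = √2 · m · conj(f(e(x))) for all x ∈ ℝ. Then for every compactly supported C¹ function h: ℝ → ℂ, ∫_ℝ ( |h'(x)|² + D²W(e(x))(h(x), h(x)) ) dx = ∫_ℝ | h'(x) − √2 · m · conj( f'(e(x)) · h(x) ) |² dx. -/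
open MeasureTheory Complex Filter

/-!
Put `v = h'` and `w = f'(e) h`. Since `D²W(z)(u,u) = 2|f'(z)u|² + 2 Re(conj(f z) f''(z) u²)`,
expanding the square gives
`|v|² + D²W(e)(h,h) = |v - √2 m conj w|² + 2 Re(conj(f(e)) f''(e) h²) + 2√2 Re(conj m w v)`.
By the equation for `e` and `|m| = 1`, the last two terms are exactly the derivative of
`Re(√2 conj m f'(e) h²)`, which has compact support, so they integrate to zero.
-/

open scoped ComplexConjugate

lemma Complex.norm_sub_mul_conj_sq {m : ℂ} (hm : ‖m‖ = 1) (r : ℝ) (v w : ℂ) :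
    ‖v - r * m * conj w‖ ^ 2
      = ‖v‖ ^ 2 + r ^ 2 * ‖w‖ ^ 2 - 2 * r * (conj m * w * v).re := by
  have hm' : m.re * m.re + m.im * m.im = 1 := by
    rw [← normSq_apply, normSq_eq_norm_sq, hm, one_pow]
  simp only [← normSq_eq_norm_sq, normSq_apply, sub_re, sub_im, mul_re, mul_im, conj_re, conj_im,
    ofReal_re, ofReal_im]
  linear_combination r ^ 2 * (w.re * w.re + w.im * w.im) * hm'

noncomputable def reMulCLM : ℂ →L[ℝ] ℂ →L[ℝ] ℝ :=
  (ContinuousLinearMap.compL ℝ ℂ ℂ ℝ reCLM).comp (ContinuousLinearMap.mul ℝ ℂ)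

@[simp] lemma reMulCLM_apply (w u : ℂ) : reMulCLM w u = (w * u).re := rfl

variable {f : ℂ → ℂ}

lemma hasFDerivAt_W (hf : Differentiable ℂ f) (z : ℂ) :
    HasFDerivAt (W f) ((2 : ℝ) • reMulCLM (conj (f z) * deriv f z)) z := by
  refine (((hf z).hasFDerivAt.restrictScalars ℝ).norm_sq).congr_fderiv ?_
  ext u
  simp only [smul_apply, ContinuousLinearMap.comp_apply, ContinuousLinearMap.coe_restrictScalars',
    fderiv_eq_smul_deriv, smul_eq_mul, coe_innerSL_apply, Complex.inner, reMulCLM_apply,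
    nsmul_eq_mul, Nat.cast_ofNat]
  ring_nf

lemma fderiv_fderiv_W_apply (hf : Differentiable ℂ f) (z u v : ℂ) :
    fderiv ℝ (fderiv ℝ (W f)) z u v
      = 2 * (conj (f z) * deriv (deriv f) z * u * v
          + conj (deriv f z * u) * (deriv f z * v)).re := by
  have hfz := (hf z).hasFDerivAt.restrictScalars ℝ
  have hdfz := (hf.deriv z).hasFDerivAt.restrictScalars ℝ
  have hD : HasFDerivAt (fun w => (2 : ℝ) • reMulCLM (conj (f w) * deriv f w)) _ z :=
    (reMulCLM.hasFDerivAt.comp z (hfz.star.fun_mul hdfz)).const_smul (2 : ℝ)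
  rw [funext fun z => (hasFDerivAt_W hf z).fderiv, hD.fderiv]
  simp only [smul_apply, ContinuousLinearMap.comp_apply, add_apply,
    ContinuousLinearMap.coe_restrictScalars', fderiv_eq_smul_deriv, smul_eq_mul,
    ContinuousLinearEquiv.coe_coe, starL'_apply, reMulCLM_apply, RCLike.star_def, map_mul]
  ring_nf

lemma norm_sq_add_fderiv_fderiv_W_apply (hf : Differentiable ℂ f) {m : ℂ} (hm : ‖m‖ = 1)
    (z u v : ℂ) :
    ‖v‖ ^ 2 + fderiv ℝ (fderiv ℝ (W f)) z u u
      = ‖v - (Real.sqrt 2 : ℂ) * m * conj (deriv f z * u)‖ ^ 2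
        + (2 * (conj (f z) * deriv (deriv f) z * u * u).re
          + 2 * Real.sqrt 2 * (conj m * (deriv f z * u) * v).re) := by
  rw [fderiv_fderiv_W_apply hf, norm_sub_mul_conj_sq hm, add_re, conj_mul', ← ofReal_pow,
    ofReal_re, Real.sq_sqrt zero_le_two]
  ring

noncomputable def boundaryTerm (f : ℂ → ℂ) (m : ℂ) (e h : ℝ → ℂ) (x : ℝ) : ℝ :=
  ((Real.sqrt 2 : ℂ) * conj m * deriv f (e x) * h x ^ 2).re

lemma hasDerivAt_boundaryTerm (hf : Differentiable ℂ f) {m : ℂ} (hm : ‖m‖ = 1)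
    {e : ℝ → ℂ} {x : ℝ} (he : HasDerivAt e ((Real.sqrt 2 : ℂ) * m * conj (f (e x))) x)
    {h : ℝ → ℂ} {h' : ℂ} (hh : HasDerivAt h h' x) :
    HasDerivAt (boundaryTerm f m e h)
      (2 * (conj (f (e x)) * deriv (deriv f) (e x) * h x * h x).re
        + 2 * Real.sqrt 2 * (conj m * (deriv f (e x) * h x) * h').re) x := by
  have hmm : conj m * m = 1 := by simp [conj_mul', hm]
  have hs : (Real.sqrt 2 : ℂ) * Real.sqrt 2 = 2 := by
    rw [← ofReal_mul, Real.mul_self_sqrt zero_le_two, ofReal_ofNat]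
  have hA : HasDerivAt (fun y => deriv f (e y))
      (deriv (deriv f) (e x) * ((Real.sqrt 2 : ℂ) * m * conj (f (e x)))) x :=
    (hf.deriv (e x)).hasDerivAt.comp x he
  have hB := (hA.const_mul ((Real.sqrt 2 : ℂ) * conj m)).mul (hh.fun_pow 2)
  refine (reCLM.hasFDerivAt.comp_hasDerivAt x hB).congr_deriv ?_
  rw [reCLM_apply, ← re_ofReal_mul, ← re_ofReal_mul, ← add_re]
  congr 1
  push_cast
  linear_combination
    (conj (f (e x)) * deriv (deriv f) (e x) * h x ^ 2) * (m * conj m * hs + 2 * hmm)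

lemma HasCompactSupport.integrable_of_eq_zero_of_deriv_eq_zero {E F : Type*}
    [NormedAddCommGroup E] [NormedSpace ℝ E] [NormedAddCommGroup F]
    {h : ℝ → E} {g : ℝ → F}
    (hsupp : HasCompactSupport h) (hg : Continuous g)
    (hzero : ∀ x, h x = 0 → deriv h x = 0 → g x = 0) : Integrable g :=
  hg.integrable_of_hasCompactSupport <| .intro (hsupp.union hsupp.deriv) fun x hx =>
    hzero x (image_eq_zero_of_notMem_tsupport fun H => hx (.inl H))
      (image_eq_zero_of_notMem_tsupport fun H => hx (.inr H))

/-- If `|m| = 1` and `e' = √2 m conj(f(e))`, then for every compactly supported `C¹`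
function `h : ℝ → ℂ`,
`∫ (|h'|² + D²W(e)(h,h)) = ∫ |h' - √2 m conj(f'(e) h)|²`,
where `D²W(z)` is the second real Fréchet derivative of `W` at `z`. -/
theorem statement8 (f : ℂ → ℂ) (hf : Differentiable ℂ f)
    (m : ℂ) (hm : ‖m‖ = 1) (e : ℝ → ℂ)
    (he : ∀ x : ℝ, HasDerivAt e ((Real.sqrt 2 : ℂ) * m * (starRingEnd ℂ) (f (e x))) x)
    (h : ℝ → ℂ) (hh : ContDiff ℝ 1 h) (hsupp : HasCompactSupport h) :
    (∫ x : ℝ, (‖deriv h x‖ ^ 2 + fderiv ℝ (fderiv ℝ (W f)) (e x) (h x) (h x)))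
      = ∫ x : ℝ, ‖deriv h x
          - (Real.sqrt 2 : ℂ) * m * (starRingEnd ℂ) (deriv f (e x) * h x)‖ ^ 2 := by
  set G' : ℝ → ℝ := fun x => 2 * (conj (f (e x)) * deriv (deriv f) (e x) * h x * h x).re
    + 2 * Real.sqrt 2 * (conj m * (deriv f (e x) * h x) * deriv h x).re
  have hG (x : ℝ) : HasDerivAt (boundaryTerm f m e h) (G' x) x :=
    hasDerivAt_boundaryTerm hf hm (he x) (hh.differentiable one_ne_zero x).hasDerivAt
  have hh_cont := hh.continuous
  have hdh_cont := hh.continuous_deriv le_rfl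
  have hf_cont := hf.continuous
  have hdf_cont := hf.deriv.continuous
  have hddf_cont := hf.deriv.deriv.continuous
  have he_cont : Continuous e := continuous_iff_continuousAt.mpr fun x => (he x).continuousAt
  have hR : Integrable fun x =>
      ‖deriv h x - (Real.sqrt 2 : ℂ) * m * conj (deriv f (e x) * h x)‖ ^ 2 :=
    hsupp.integrable_of_eq_zero_of_deriv_eq_zero (by fun_prop) fun x h0 dh0 => by simp [h0, dh0]
  have hG'_int : Integrable G' :=
    hsupp.integrable_of_eq_zero_of_deriv_eq_zero (by fun_prop) fun x h0 _ => by simp [G', h0]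
  have hG_int : Integrable (boundaryTerm f m e h) :=
    hsupp.integrable_of_eq_zero_of_deriv_eq_zero (by unfold boundaryTerm; fun_prop)
      fun x h0 _ => by simp [boundaryTerm, h0]
  calc _ = ∫ x, (‖deriv h x - (Real.sqrt 2 : ℂ) * m * conj (deriv f (e x) * h x)‖ ^ 2
          + G' x) :=
        integral_congr_ae (ae_of_all _ fun x => norm_sq_add_fderiv_fderiv_W_apply hf hm _ _ _)
    _ = _ := by
      rw [integral_add hR hG'_int,
        integral_eq_zero_of_hasDerivAt_of_integrable hG hG'_int hG_int, add_zero]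
end

section
/- Let c: ℝ → ℂ be continuous and let u, v: ℝ → ℂ be differentiable maps satisfying u'(x) = c(x)·conj(u(x)) and v'(x) = c(x)·conj(v(x)) for all x ∈ ℝ. Assume u(x) ≠ 0 for all x ∈ ℝ and that Im( conj(u(x₀)) · v(x₀) ) = 0 at some point x₀ ∈ ℝ. Then there exists a constant λ ∈ ℝ such that v(x) = λ·u(x) for all x ∈ ℝ. -/
/-!
For two solutions of `w' = c · conj w`, `(conj u · v)' = z + conj z` with `z = c · conj (u v)`
is real, so the Wronskian `W = Im (conj u · v)` is constant, hence identically zero.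
Then `(v / u)' = -2 i c W / u² = 0`, so `v / u` is a constant `q`, and
`Im q = W(x₀) / |u(x₀)|² = 0`.
-/

open Complex ComplexConjugate

theorem Complex.im_div_eq_im_conj_mul_div_normSq (a b : ℂ) :
    (b / a).im = (conj a * b).im / normSq a := by
  rw [div_im, mul_im, conj_re, conj_im]
  ring

/-- The Wronskian `u₁v₂ − u₂v₁` of `u, v : ℝ → ℂ ≅ ℝ²`. -/
def wronskian (u v : ℝ → ℂ) (x : ℝ) : ℝ :=
  (conj (u x) * v x).im

section AntilinearODE

variable {c u v : ℝ → ℂ}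

theorem hasDerivAt_wronskian {x : ℝ} (hu : HasDerivAt u (c x * conj (u x)) x)
    (hv : HasDerivAt v (c x * conj (v x)) x) : HasDerivAt (wronskian u v) 0 x := by
  refine (imCLM.hasFDerivAt.comp_hasDerivAt x (hu.star.mul hv)).congr_deriv ?_
  simp only [imCLM_apply, star_def, map_mul, conj_conj, add_im, mul_im, mul_re, conj_re, conj_im]
  ring

theorem wronskian_eq_of_hasDerivAt (hu : ∀ x, HasDerivAt u (c x * conj (u x)) x)
    (hv : ∀ x, HasDerivAt v (c x * conj (v x)) x) (x y : ℝ) :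
    wronskian u v x = wronskian u v y :=
  is_const_of_deriv_eq_zero (fun z => (hasDerivAt_wronskian (hu z) (hv z)).differentiableAt)
    (fun z => (hasDerivAt_wronskian (hu z) (hv z)).deriv) x y

theorem hasDerivAt_div_of_hasDerivAt {x : ℝ} (hu : HasDerivAt u (c x * conj (u x)) x)
    (hv : HasDerivAt v (c x * conj (v x)) x) (hux : u x ≠ 0) :
    HasDerivAt (fun y => v y / u y) (-2 * I * c x * wronskian u v x / u x ^ 2) x := by
  have hnum : c x * conj (v x) * u x - v x * (c x * conj (u x)) =
      -2 * I * c x * wronskian u v x := by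
    have hsub := sub_conj (conj (u x) * v x)
    rw [map_mul, conj_conj, ofReal_mul, ofReal_ofNat] at hsub
    rw [wronskian]
    linear_combination (-c x) * hsub
  have hdiv := hv.div hu hux
  rw [hnum] at hdiv
  exact hdiv

end AntilinearODE

theorem statement11_general (c : ℝ → ℂ) (u v : ℝ → ℂ)
    (hu : ∀ x : ℝ, HasDerivAt u (c x * (starRingEnd ℂ) (u x)) x)
    (hv : ∀ x : ℝ, HasDerivAt v (c x * (starRingEnd ℂ) (v x)) x)
    (hu0 : ∀ x : ℝ, u x ≠ 0)
    (x₀ : ℝ) (hW : ((starRingEnd ℂ) (u x₀) * v x₀).im = 0) :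
    ∃ lam : ℝ, ∀ x : ℝ, v x = (lam : ℂ) * u x := by
  have hW0 : ∀ x, wronskian u v x = 0 := fun x => (wronskian_eq_of_hasDerivAt hu hv x x₀).trans hW
  have hdiv : ∀ x, HasDerivAt (fun y => v y / u y) 0 x := fun x => by
    simpa [hW0] using hasDerivAt_div_of_hasDerivAt (hu x) (hv x) (hu0 x)
  set q := v x₀ / u x₀
  have hq : ∀ x, v x / u x = q := fun x =>
    is_const_of_deriv_eq_zero (fun y => (hdiv y).differentiableAt) (fun y => (hdiv y).deriv) x x₀
  have hq_real : (q.re : ℂ) = q := by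
    refine conj_eq_iff_re.mp (conj_eq_iff_im.mpr ?_)
    rw [im_div_eq_im_conj_mul_div_normSq, hW, zero_div]
  refine ⟨q.re, fun x => ?_⟩
  rw [hq_real, ← hq x, div_mul_cancel₀ _ (hu0 x)]

/-- If `u, v : ℝ → ℂ` solve the antilinear ODE `w' = c(x) conj w` with `c`
continuous, `u` never vanishes, and the Wronskian `Im(conj(u) v)` vanishes at some
point `x₀`, then `v = λ u` for a real constant `λ`. -/
theorem statement11 (c : ℝ → ℂ) (hc : Continuous c) (u v : ℝ → ℂ)
    (hu : ∀ x : ℝ, HasDerivAt u (c x * (starRingEnd ℂ) (u x)) x)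
    (hv : ∀ x : ℝ, HasDerivAt v (c x * (starRingEnd ℂ) (v x)) x)
    (hu0 : ∀ x : ℝ, u x ≠ 0)
    (x₀ : ℝ) (hW : ((starRingEnd ℂ) (u x₀) * v x₀).im = 0) :
    ∃ lam : ℝ, ∀ x : ℝ, v x = (lam : ℂ) * u x :=
  statement11_general c u v hu hv hu0 x₀ hW
end
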